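/- Suppose for every substitution σ over variables V satisfying constraint C, pair (A[σ], B[σ]) lies in type simulation R₁, and for every such σ, (B[σ], D[σ]) lies in type simulation R₂. Then there is a type simulation R (namely the composition R₂ ∘ R₁ closed appropriately) such that for every σ satisfying C, (A[σ], D[σ]) ∈ R; i.e. the guarded subtyping judgment '∀V. C → · <: ·' is transitive. -/

import Mathlib

/-- Ground session types. -/
inductive STy : Type 1 where
  | unit : STy
  | ichoice (L : Finset String) (f : String → STy) : STy
  | echoice (L : Finset String) (f : String → STy) : STy
  | tensor (a b : STy) : STy
  | lolli (a b : STy) : STy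
  | assert (p : Prop) (a : STy) : STy
  | assume (p : Prop) (a : STy) : STy
  | exi (f : ℕ → STy) : STy
  | all (f : ℕ → STy) : STy

/-- The simulation operator Φ. -/
def Phi (R : STy → STy → Prop) : STy → STy → Prop := fun a b =>
  match a, b with
  | .unit, .unit => True
  | .ichoice L f, .ichoice M g => L ⊆ M ∧ ∀ ℓ ∈ L, R (f ℓ) (g ℓ)
  | .echoice L f, .echoice M g => M ⊆ L ∧ ∀ m ∈ M, R (f m) (g m)
  | .tensor a1 a2, .tensor b1 b2 => R a1 b1 ∧ R a2 b2
  | .lolli a1 a2, .lolli b1 b2 => R b1 a1 ∧ R a2 b2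
  | .assert p a', .assert q b' => (p → q) ∧ R a' b'
  | .assume p a', .assume q b' => (q → p) ∧ R a' b'
  | .exi f, .exi g => ∀ n, R (f n) (g n)
  | .all f, .all g => ∀ n, R (f n) (g n)
  | _, _ => False

/-- A type simulation is a post-fixed point of Φ. -/
def IsSim (R : STy → STy → Prop) : Prop := ∀ a b, R a b → Phi R a b

/-- Coinductive subtyping: union of all type simulations. -/
def SubT (a b : STy) : Prop := ∃ R, IsSim R ∧ R a b

/- The contravariant argument of `lolli` composes the other way round, so `T` must contain both
`R ∘ S` and `S ∘ R`. -/
theorem Phi_comp {R S T : STy → STy → Prop} (hRS : ∀ a b c, R a b → S b c → T a c)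
    (hSR : ∀ a b c, S a b → R b c → T a c) {a b c : STy} (hab : Phi R a b) (hbc : Phi S b c) :
    Phi T a c := by
  cases a <;> cases b <;> simp only [Phi] at hab <;> cases c <;> simp only [Phi] at hbc ⊢
  · exact ⟨hab.1.trans hbc.1, fun l hl => hRS _ _ _ (hab.2 l hl) (hbc.2 l (hab.1 hl))⟩
  · exact ⟨hbc.1.trans hab.1, fun m hm => hRS _ _ _ (hab.2 m (hbc.1 hm)) (hbc.2 m hm)⟩
  · exact ⟨hRS _ _ _ hab.1 hbc.1, hRS _ _ _ hab.2 hbc.2⟩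
  · exact ⟨hSR _ _ _ hbc.1 hab.1, hRS _ _ _ hab.2 hbc.2⟩
  · exact ⟨hbc.1 ∘ hab.1, hRS _ _ _ hab.2 hbc.2⟩
  · exact ⟨hab.1 ∘ hbc.1, hRS _ _ _ hab.2 hbc.2⟩
  · exact fun n => hRS _ _ _ (hab n) (hbc n)
  · exact fun n => hRS _ _ _ (hab n) (hbc n)

theorem IsSim.comp_sup_comp {R S : STy → STy → Prop} (hR : IsSim R) (hS : IsSim S) :
    IsSim (Relation.Comp R S ⊔ Relation.Comp S R) := by
  rintro a c (⟨b, hab, hbc⟩ | ⟨b, hab, hbc⟩)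
  · exact Phi_comp (fun _ y _ hxy hyz => Or.inl ⟨y, hxy, hyz⟩)
      (fun _ y _ hxy hyz => Or.inr ⟨y, hxy, hyz⟩) (hR a b hab) (hS b c hbc)
  · exact Phi_comp (fun _ y _ hxy hyz => Or.inr ⟨y, hxy, hyz⟩)
      (fun _ y _ hxy hyz => Or.inl ⟨y, hxy, hyz⟩) (hS a b hab) (hR b c hbc)

theorem stmt14 {Var : Type} (C : (Var → ℕ) → Prop)
    (A B D : (Var → ℕ) → STy) (R1 R2 : STy → STy → Prop)
    (hR1 : IsSim R1) (hR2 : IsSim R2)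
    (h1 : ∀ σ, C σ → R1 (A σ) (B σ))
    (h2 : ∀ σ, C σ → R2 (B σ) (D σ)) :
    ∃ R : STy → STy → Prop, IsSim R ∧ ∀ σ, C σ → R (A σ) (D σ) :=
  ⟨_, hR1.comp_sup_comp hR2, fun σ hσ => Or.inl ⟨B σ, h1 σ hσ, h2 σ hσ⟩⟩
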